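/- Given non-atomic Borel probability measures μ₁, ..., μ_n on [0,1], a point x ∈ (0,1), a partition of {1,...,n} into nonempty sets A ∪ {t} and B ∪ {t} overlapping only in t, and demands with ∑_{i ∈ A} αᵢ + α' equal to μ's normalization on [0,x] and ∑_{i ∈ B} αᵢ + α'' on (x,1] where α' + α'' = α_t: if the restricted-and-rescaled division problem on [0,x] for agents A ∪ {t} is solvable with a cuts and the one on (x,1] for agents B ∪ {t} is solvable with b cuts, then the original problem for all n agents is solvable with a + b + 1 cuts. -/
import Mathlib


open MeasureTheory Set

/-- The division problem on the subinterval `[u,v]` for the agents in `E` with demands `d` is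
solvable with (at most) `m` cuts: there are cut points `u = x₀ ≤ ⋯ ≤ x_{m+1} = v` and an
assignment of the `m+1` half-open pieces `(x_j, x_{j+1}]` to agents in `E` so that each agent
`i ∈ E` receives total `μ i`-measure at least `d i`. -/
def SolvableOn (n : ℕ) (μ : Fin n → MeasureTheory.Measure ℝ) (u v : ℝ) (m : ℕ)
    (E : Finset (Fin n)) (d : Fin n → ℝ) : Prop :=
  ∃ (x : Fin (m + 2) → ℝ) (g : Fin (m + 1) → Fin n),
    Monotone x ∧ x 0 = u ∧ x (Fin.last (m + 1)) = v ∧ (∀ j, g j ∈ E) ∧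
    ∀ i ∈ E, ENNReal.ofReal (d i) ≤
      μ i (⋃ j ∈ {j : Fin (m + 1) | g j = i}, Set.Ioc (x j.castSucc) (x j.succ))

/-- Gluing lemma: split the agents as `A ∪ {t}` and `B ∪ {t}` (overlapping only in `t`) and
split agent `t`'s demand as `α_t = α' + α''`. If the division problem on `[0,x]` for `A ∪ {t}`
(with demand `α'` for `t`) is solvable with `a` cuts and the one on `(x,1]` for `B ∪ {t}`
(with demand `α''` for `t`) is solvable with `b` cuts, then the original problem for all `n`
agents is solvable with `a + b + 1` cuts. -/
theorem glue_subproblems (n : ℕ) (μ : Fin n → Measure ℝ)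
    (hprob : ∀ i, IsProbabilityMeasure (μ i))
    (hs : ∀ i, μ i (Set.Icc (0 : ℝ) 1)ᶜ = 0) (hna : ∀ i (p : ℝ), μ i {p} = 0)
    (x : ℝ) (hx : x ∈ Set.Ioo (0 : ℝ) 1)
    (hpos : ∀ i, 0 < μ i (Set.Icc 0 x))
    (A B : Finset (Fin n)) (t : Fin n) (htA : t ∉ A) (htB : t ∉ B)
    (hAB : Disjoint A B) (hA : A.Nonempty) (hB : B.Nonempty)
    (hcover : A ∪ B ∪ {t} = Finset.univ)
    (α : Fin n → ℝ) (hα : ∀ i, 0 ≤ α i) (hsum : ∑ i, α i = 1)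
    (α' α'' : ℝ) (hα' : 0 ≤ α') (hα'' : 0 ≤ α'') (hsplit : α' + α'' = α t)
    (a b : ℕ)
    (hleft : SolvableOn n μ 0 x a (insert t A) (Function.update α t α'))
    (hright : SolvableOn n μ x 1 b (insert t B) (Function.update α t α'')) :
    SolvableOn n μ 0 1 (a + b + 1) Finset.univ α := by
  classical
  obtain ⟨p, g, hpm, hp0, hpl, hgE, hgd⟩ := hleft
  obtain ⟨q, h, hqm, hq0, hql, hhE, hhd⟩ := hright
  set z : Fin (a + b + 1 + 2) → ℝ := fun j =>
    if hj : (j : ℕ) ≤ a + 1 then p ⟨(j : ℕ), by omega⟩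
    else q ⟨(j : ℕ) - (a + 1), by have := j.isLt; omega⟩ with hzdef
  set G : Fin (a + b + 1 + 1) → Fin n := fun j =>
    if hj : (j : ℕ) ≤ a then g ⟨(j : ℕ), by omega⟩
    else h ⟨(j : ℕ) - (a + 1), by have := j.isLt; omega⟩ with hGdef
  have hzL : ∀ (j : Fin (a + b + 1 + 2)) (hj : (j : ℕ) ≤ a + 1),
      z j = p ⟨(j : ℕ), by omega⟩ := by
    intro j hj
    simp only [hzdef]
    rw [dif_pos hj]
  have hzR : ∀ (j : Fin (a + b + 1 + 2)) (hj : a + 1 ≤ (j : ℕ)),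
      z j = q ⟨(j : ℕ) - (a + 1), by have := j.isLt; omega⟩ := by
    intro j hj
    simp only [hzdef]
    rcases eq_or_lt_of_le hj with hv | hv
    · rw [dif_pos (le_of_eq hv.symm)]
      have e1 : (⟨(j : ℕ), by omega⟩ : Fin (a + 1 + 1)) = Fin.last (a + 1) :=
        Fin.ext (by simp [← hv])
      have e2 : (⟨(j : ℕ) - (a + 1), by have := j.isLt; omega⟩ : Fin (b + 1 + 1)) = 0 :=
        Fin.ext (by simp; omega)
      rw [e1, e2, hpl, hq0]
    · rw [dif_neg (by omega)]
  -- embeddings of piece indices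
  have hGL : ∀ jL : Fin (a + 1), G ⟨(jL : ℕ), by omega⟩ = g jL := by
    intro jL
    simp only [hGdef]
    rw [dif_pos (by exact Nat.lt_succ_iff.mp jL.isLt)]
  have hGR : ∀ jR : Fin (b + 1), G ⟨a + 1 + (jR : ℕ), by have := jR.isLt; omega⟩ = h jR := by
    intro jR
    simp only [hGdef]
    rw [dif_neg (by omega)]
    congr 1
    exact Fin.ext (by simp)
  have hpcL : ∀ jL : Fin (a + 1),
      Ioc (z (⟨(jL : ℕ), by omega⟩ : Fin (a + b + 1 + 1)).castSucc)
          (z (⟨(jL : ℕ), by omega⟩ : Fin (a + b + 1 + 1)).succ)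
      = Ioc (p jL.castSucc) (p jL.succ) := by
    intro jL
    have e1 : z (⟨(jL : ℕ), by omega⟩ : Fin (a + b + 1 + 1)).castSucc = p jL.castSucc := by
      rw [hzL _ (by simp only [Fin.coe_castSucc]; omega)]
      congr 1
    have e2 : z (⟨(jL : ℕ), by omega⟩ : Fin (a + b + 1 + 1)).succ = p jL.succ := by
      rw [hzL _ (by simp only [Fin.val_succ]; omega)]
      congr 1
    rw [e1, e2]
  have hpcR : ∀ jR : Fin (b + 1),
      Ioc (z (⟨a + 1 + (jR : ℕ), by have := jR.isLt; omega⟩ : Fin (a + b + 1 + 1)).castSucc)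
          (z (⟨a + 1 + (jR : ℕ), by have := jR.isLt; omega⟩ : Fin (a + b + 1 + 1)).succ)
      = Ioc (q jR.castSucc) (q jR.succ) := by
    intro jR
    have e1 : z (⟨a + 1 + (jR : ℕ), by have := jR.isLt; omega⟩ : Fin (a + b + 1 + 1)).castSucc
        = q jR.castSucc := by
      rw [hzR _ (by simp only [Fin.coe_castSucc]; omega)]
      congr 1; exact Fin.ext (by simp only [Fin.coe_castSucc]; omega)
    have e2 : z (⟨a + 1 + (jR : ℕ), by have := jR.isLt; omega⟩ : Fin (a + b + 1 + 1)).succ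
        = q jR.succ := by
      rw [hzR _ (by simp only [Fin.val_succ]; omega)]
      congr 1; exact Fin.ext (by simp only [Fin.val_succ]; omega)
    rw [e1, e2]
  have hsubL : ∀ i : Fin n,
      (⋃ jL ∈ {jL : Fin (a + 1) | g jL = i}, Ioc (p jL.castSucc) (p jL.succ)) ⊆
        ⋃ J ∈ {J : Fin (a + b + 1 + 1) | G J = i}, Ioc (z J.castSucc) (z J.succ) := by
    intro i y hy
    simp only [mem_iUnion, mem_setOf_eq, exists_prop] at hy ⊢
    obtain ⟨jL, hj, hy⟩ := hy
    exact ⟨⟨(jL : ℕ), by omega⟩, by rw [hGL]; exact hj, by rw [hpcL]; exact hy⟩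
  have hsubR : ∀ i : Fin n,
      (⋃ jR ∈ {jR : Fin (b + 1) | h jR = i}, Ioc (q jR.castSucc) (q jR.succ)) ⊆
        ⋃ J ∈ {J : Fin (a + b + 1 + 1) | G J = i}, Ioc (z J.castSucc) (z J.succ) := by
    intro i y hy
    simp only [mem_iUnion, mem_setOf_eq, exists_prop] at hy ⊢
    obtain ⟨jR, hj, hy⟩ := hy
    exact ⟨⟨a + 1 + (jR : ℕ), by have := jR.isLt; omega⟩,
      by rw [hGR]; exact hj, by rw [hpcR]; exact hy⟩
  refine ⟨z, G, ?_, ?_, ?_, fun _ => Finset.mem_univ _, ?_⟩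
  · intro j j' hjj
    have hjj' : (j : ℕ) ≤ (j' : ℕ) := hjj
    rcases le_or_gt (j' : ℕ) (a + 1) with h1 | h1
    · rw [hzL j (le_trans hjj' h1), hzL j' h1]
      exact hpm (by simpa using hjj')
    · rcases le_or_gt (a + 1) (j : ℕ) with h2 | h2
      · rw [hzR j h2, hzR j' (by omega)]
        exact hqm (by simp [Fin.mk_le_mk]; omega)
      · rw [hzL j (by omega), hzR j' (by omega)]
        refine le_trans (le_trans (hpm (Fin.le_last _)) (le_of_eq ?_)) (hqm (Fin.zero_le _))
        rw [hpl, hq0]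
  · rw [hzL 0 (by simp only [Fin.val_zero]; omega)]
    simpa using hp0
  · rw [hzR _ (by simp only [Fin.val_last]; omega)]
    have e : (⟨((Fin.last (a + b + 1 + 1) : Fin (a + b + 1 + 2)) : ℕ) - (a + 1),
        by have := (Fin.last (a + b + 1 + 1)).isLt; omega⟩ : Fin (b + 1 + 1)) = Fin.last (b + 1) :=
      Fin.ext (by simp only [Fin.val_last]; omega)
    rw [e, hql]
  · intro i _
    have hi : i ∈ A ∪ B ∪ ({t} : Finset (Fin n)) := hcover ▸ Finset.mem_univ i
    simp only [Finset.mem_union, Finset.mem_singleton] at hi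
    rcases hi with (hiA | hiB) | hit
    · have hne : i ≠ t := fun e => htA (e ▸ hiA)
      have := hgd i (Finset.mem_insert_of_mem hiA)
      rw [Function.update_of_ne hne] at this
      exact le_trans this (measure_mono (hsubL i))
    · have hne : i ≠ t := fun e => htB (e ▸ hiB)
      have := hhd i (Finset.mem_insert_of_mem hiB)
      rw [Function.update_of_ne hne] at this
      exact le_trans this (measure_mono (hsubR i))
    · subst hit
      have hL := hgd i (Finset.mem_insert_self i A)
      have hR := hhd i (Finset.mem_insert_self i B)
      rw [Function.update_self] at hL hR
      set SL := ⋃ jL ∈ {jL : Fin (a + 1) | g jL = i}, Ioc (p jL.castSucc) (p jL.succ) with hSL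
      set SR := ⋃ jR ∈ {jR : Fin (b + 1) | h jR = i}, Ioc (q jR.castSucc) (q jR.succ) with hSR
      have hSLsub : SL ⊆ Iic x := by
        refine iUnion₂_subset fun jL _ => ?_
        refine subset_trans Ioc_subset_Iic_self (Iic_subset_Iic.mpr ?_)
        calc p jL.succ ≤ p (Fin.last (a + 1)) := hpm (Fin.le_last _)
          _ = x := hpl
      have hSRsub : SR ⊆ Ioi x := by
        refine iUnion₂_subset fun jR _ => ?_
        refine subset_trans Ioc_subset_Ioi_self (Ioi_subset_Ioi ?_)
        calc x = q 0 := hq0.symm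
          _ ≤ q jR.castSucc := hqm (Fin.zero_le _)
      have hdisj : Disjoint SL SR :=
        Disjoint.mono hSLsub hSRsub (Iic_disjoint_Ioi le_rfl)
      have hmeas : MeasurableSet SR :=
        MeasurableSet.biUnion (Set.to_countable _) fun _ _ => measurableSet_Ioc
      calc ENNReal.ofReal (α i) = ENNReal.ofReal α' + ENNReal.ofReal α'' := by
            rw [← hsplit, ENNReal.ofReal_add hα' hα'']
        _ ≤ μ i SL + μ i SR := add_le_add hL hR
        _ = μ i (SL ∪ SR) := (measure_union hdisj hmeas).symm
        _ ≤ _ := measure_mono (union_subset (hsubL i) (hsubR i))
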